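/- Fix N ∈ ℕ and let u : ℝ → (ℕ → ℂ) with u(t,k) = 0 for all k > N, each t ↦ u(t,k) differentiable, satisfying the Galerkin system: for 0 ≤ k ≤ N, i·(d/dt)u(t,k) = ∑ u(t,n)·conj(u(t,j))·u(t,m), summed over (n,j,m) with 0 ≤ n,j,m ≤ N and n + m = j + k. Then the quantity ∑_{k=0}^{N} k·|u(t,k)|² is constant in t ∈ ℝ; consequently the H^{1/2} norm of the Galerkin solution is conserved. -/

import Mathlib

open scoped BigOperators

/-- The cubic nonlinearity of the Galerkin-truncated Szegő equation on the Fourier side: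
for frequency `k`, the sum of `u(t,n) * conj (u(t,j)) * u(t,m)` over all triples
`(n,j,m)` with `0 ≤ n,j,m ≤ N` and `n + m = j + k`. -/
noncomputable def galerkinCubic (N : ℕ) (u : ℝ → ℕ → ℂ) (t : ℝ) (k : ℕ) : ℂ :=
  ∑ p ∈ (Finset.range (N + 1) ×ˢ Finset.range (N + 1) ×ˢ Finset.range (N + 1)).filter
      (fun p => p.1 + p.2.2 = p.2.1 + k),
    u t p.1 * (starRingEnd ℂ) (u t p.2.1) * u t p.2.2

/-- `u : ℝ → (ℕ → ℂ)` is a solution of the `N`-th Galerkin approximation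
`i ∂ₜ u_N = P_N(|u_N|² u_N)` of the cubic Szegő equation: the Fourier coefficients
vanish for `k > N`, and for `0 ≤ k ≤ N` the map `t ↦ u(t,k)` is differentiable with
`i u'(t,k) = ∑_{0 ≤ n,j,m ≤ N, n+m=j+k} u(t,n) conj(u(t,j)) u(t,m)`. -/
def IsGalerkinSolution (N : ℕ) (u : ℝ → ℕ → ℂ) : Prop :=
  (∀ t : ℝ, ∀ k : ℕ, N < k → u t k = 0) ∧
  ∀ t : ℝ, ∀ k : ℕ, k ≤ N →
    HasDerivAt (fun s : ℝ => u s k) (-Complex.I * galerkinCubic N u t k) t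

/-! The momentum `P(v) = ∑ k |v k|²` of a Galerkin solution has time derivative
`2 Im A_k`, where `A_w = ∑ w · u_n ū_j u_m ū_k` (this is `resonantSum N (u t) w`) runs over
the resonant quadruples `n + m = j + k`. The relabellings `n ↔ m` and `j ↔ k`, and complex
conjugation, which exchanges `(n, m)` with `(j, k)`, give `A_m = A_n`, `A_j = A_k` and
`conj A_k = A_m`, while resonance gives `A_n + A_m = A_j + A_k`. Hence `2 A_m = 2 A_k`, so
`A_k = conj A_k` is real and `P` is constant. -/

open Finset ComplexConjugate Function

namespace Galerkin

/-- Quadruples `(k, n, j, m)` of frequencies in `{0, …, N}` with `n + m = j + k`. -/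
def resonantQuads (N : ℕ) : Finset (ℕ × ℕ × ℕ × ℕ) :=
  (range (N + 1) ×ˢ range (N + 1) ×ˢ range (N + 1) ×ˢ range (N + 1)).filter
    fun q => q.2.1 + q.2.2.2 = q.2.2.1 + q.1

theorem mem_resonantQuads {N k n j m : ℕ} :
    (k, n, j, m) ∈ resonantQuads N ↔ k ≤ N ∧ n ≤ N ∧ j ≤ N ∧ m ≤ N ∧ n + m = j + k := by
  simp [resonantQuads, and_assoc]

def quartic (v : ℕ → ℂ) (q : ℕ × ℕ × ℕ × ℕ) : ℂ :=
  v q.2.1 * conj (v q.2.2.1) * v q.2.2.2 * conj (v q.1)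

noncomputable def resonantSum (N : ℕ) (v : ℕ → ℂ) (w : ℕ × ℕ × ℕ × ℕ → ℕ) : ℂ :=
  ∑ q ∈ resonantQuads N, (w q : ℂ) * quartic v q

variable {N : ℕ} {v : ℕ → ℂ}

theorem resonantSum_comp {σ : ℕ × ℕ × ℕ × ℕ → ℕ × ℕ × ℕ × ℕ} (hσ : Involutive σ)
    (hQ : ∀ q ∈ resonantQuads N, σ q ∈ resonantQuads N) (w : ℕ × ℕ × ℕ × ℕ → ℕ) :
    resonantSum N v (fun q => w (σ q)) = ∑ q ∈ resonantQuads N, (w q : ℂ) * quartic v (σ q) :=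
  sum_nbij' σ σ hQ hQ (fun q _ => hσ q) (fun q _ => hσ q) fun q _ => by rw [hσ]

theorem resonantSum_m_eq_n :
    resonantSum N v (·.2.2.2) = resonantSum N v (·.2.1) := by
  have hσ : Involutive fun q : ℕ × ℕ × ℕ × ℕ => (q.1, q.2.2.2, q.2.2.1, q.2.1) :=
    fun _ => rfl
  refine (resonantSum_comp hσ ?_ (·.2.1)).trans ?_
  · rintro ⟨k, n, j, m⟩ hq
    simp only [mem_resonantQuads] at hq ⊢
    omega
  · exact sum_congr rfl fun _ _ => by unfold quartic; ring

theorem resonantSum_j_eq_k :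
    resonantSum N v (·.2.2.1) = resonantSum N v (·.1) := by
  have hσ : Involutive fun q : ℕ × ℕ × ℕ × ℕ => (q.2.2.1, q.2.1, q.1, q.2.2.2) :=
    fun _ => rfl
  refine (resonantSum_comp hσ ?_ (·.1)).trans ?_
  · rintro ⟨k, n, j, m⟩ hq
    simp only [mem_resonantQuads] at hq ⊢
    omega
  · exact sum_congr rfl fun _ _ => by unfold quartic; ring

theorem conj_resonantSum_k_eq_m :
    conj (resonantSum N v (·.1)) = resonantSum N v (·.2.2.2) := by
  have hσ : Involutive fun q : ℕ × ℕ × ℕ × ℕ => (q.2.2.2, q.2.2.1, q.2.1, q.1) :=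
    fun _ => rfl
  refine ((resonantSum_comp hσ ?_ (·.1)).trans ?_).symm
  · rintro ⟨k, n, j, m⟩ hq
    simp only [mem_resonantQuads] at hq ⊢
    omega
  · unfold resonantSum quartic
    rw [map_sum]
    exact sum_congr rfl fun _ _ => by simp only [map_mul, map_natCast, Complex.conj_conj]; ring

theorem resonantSum_n_add_m :
    resonantSum N v (·.2.1) + resonantSum N v (·.2.2.2)
      = resonantSum N v (·.2.2.1) + resonantSum N v (·.1) := by
  unfold resonantSum
  simp only [← sum_add_distrib, ← add_mul]
  refine sum_congr rfl fun q hq => ?_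
  have hres : (q.2.1 : ℂ) + q.2.2.2 = q.2.2.1 + q.1 := by exact_mod_cast (mem_filter.mp hq).2
  rw [hres]

theorem conj_resonantSum_k_eq_self : conj (resonantSum N v (·.1)) = resonantSum N v (·.1) := by
  linear_combination conj_resonantSum_k_eq_m + (resonantSum_n_add_m + resonantSum_m_eq_n
    + resonantSum_j_eq_k) / 2

theorem sum_mul_galerkinCubic_mul_conj (u : ℝ → ℕ → ℂ) (t : ℝ) :
    ∑ k ∈ range (N + 1), (k : ℂ) * (galerkinCubic N u t k * conj (u t k))
      = resonantSum N (u t) (·.1) := by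
  unfold resonantSum resonantQuads galerkinCubic quartic
  rw [sum_filter, sum_product]
  refine sum_congr rfl fun k _ => ?_
  rw [sum_filter, sum_mul, mul_sum]
  refine sum_congr rfl fun p _ => ?_
  split_ifs <;> ring

theorem im_sum_mul_galerkinCubic_mul_conj (u : ℝ → ℕ → ℂ) (t : ℝ) :
    (∑ k ∈ range (N + 1), (k : ℂ) * (galerkinCubic N u t k * conj (u t k))).im = 0 := by
  rw [sum_mul_galerkinCubic_mul_conj, ← Complex.conj_eq_iff_im]
  exact conj_resonantSum_k_eq_self

noncomputable def momentum (N : ℕ) (v : ℕ → ℂ) : ℝ :=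
  ∑ k ∈ range (N + 1), (k : ℝ) * ‖v k‖ ^ 2

theorem hasDerivAt_momentum {u : ℝ → ℕ → ℂ} (hu : IsGalerkinSolution N u) (t : ℝ) :
    HasDerivAt (fun s => momentum N (u s)) 0 t := by
  have hterm : ∀ k ∈ range (N + 1), HasDerivAt (fun s => (k : ℝ) * ‖u s k‖ ^ 2)
      (2 * ((k : ℂ) * (galerkinCubic N u t k * conj (u t k))).im) t := fun k hk => by
    refine (((hu.2 t k (mem_range_succ_iff.mp hk)).norm_sq).const_mul
      (k : ℝ)).congr_deriv ?_
    rw [Complex.inner, mul_assoc, neg_mul, Complex.neg_re, Complex.I_mul_re, neg_neg,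
      ← Complex.ofReal_natCast, Complex.im_ofReal_mul]
    ring
  refine (HasDerivAt.fun_sum hterm).congr_deriv ?_
  rw [← mul_sum, ← Complex.im_sum, im_sum_mul_galerkinCubic_mul_conj, mul_zero]

end Galerkin

/-- The quantity `∑_{k=0}^{N} k |u(t,k)|²` (the homogeneous `H^{1/2}`
norm squared of the Galerkin solution) is conserved in time. -/
theorem galerkin_H_half_conservation (N : ℕ) (u : ℝ → ℕ → ℂ)
    (hu : IsGalerkinSolution N u) :
    ∀ t : ℝ, ∑ k ∈ Finset.range (N + 1), (k : ℝ) * ‖u t k‖ ^ 2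
      = ∑ k ∈ Finset.range (N + 1), (k : ℝ) * ‖u 0 k‖ ^ 2 := by
  intro t
  have hP := Galerkin.hasDerivAt_momentum hu
  exact is_const_of_deriv_eq_zero (fun s => (hP s).differentiableAt) (fun s => (hP s).deriv) t 0
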